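/- arXiv:2601.10977 — 2 statements merged into one kernel-verified Lean document; each statement's English description precedes it below -/
import Mathlib

section
/- Let τ₁, τ₂, τ₃, τ₄ > 0 be real numbers and let ω₁, ω₂, ω₃, ω₄ be defined by ω₁ = √(τ₂τ₃τ₄)/[(√τ₁+√τ₃)(√(τ₁τ₃)+√(τ₂τ₄))], ω₂ = √(τ₁τ₃τ₄)/[(√τ₂+√τ₄)(√(τ₁τ₃)+√(τ₂τ₄))], ω₃ = √(τ₁τ₂τ₄)/[(√τ₁+√τ₃)(√(τ₁τ₃)+√(τ₂τ₄))], ω₄ = √(τ₁τ₂τ₃)/[(√τ₂+√τ₄)(√(τ₁τ₃)+√(τ₂τ₄))]. Then ω₁·τ₁ - ω₂·τ₂ + ω₃·τ₃ - ω₄·τ₄ = 0. -/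
open Real

/-- Since `m √t · s + m √s · t = m √s √t (√s + √t)`, the factor `√s + √t` shared by the weights
of a pair of opposite branches cancels, so each pair contributes `m √(s t) / D`. -/
theorem sqrt_weight_pair_second_moment {s t : ℝ} (hs : 0 < s) (ht : 0 ≤ t) (m D : ℝ) :
    m * √t / ((√s + √t) * D) * s + m * √s / ((√s + √t) * D) * t = m * √(s * t) / D := by
  obtain ⟨a, ha, rfl⟩ : ∃ a, 0 < a ∧ s = a ^ 2 := ⟨√s, sqrt_pos.2 hs, (sq_sqrt hs.le).symm⟩
  obtain ⟨c, hc, rfl⟩ : ∃ c, 0 ≤ c ∧ t = c ^ 2 := ⟨√t, sqrt_nonneg t, (sq_sqrt ht).symm⟩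
  rw [sqrt_mul (sq_nonneg a), sqrt_sq ha.le, sqrt_sq hc]
  have hac : a + c ≠ 0 := by positivity
  calc m * c / ((a + c) * D) * a ^ 2 + m * a / ((a + c) * D) * c ^ 2
      = (a + c) * (m * (a * c)) / ((a + c) * D) := by
        ring
    _ = m * (a * c) / D := mul_div_mul_left _ _ hac

theorem weights_second_moment (τ₁ τ₂ τ₃ τ₄ : ℝ)
    (h₁ : 0 < τ₁) (h₂ : 0 < τ₂) (h₃ : 0 < τ₃) (h₄ : 0 < τ₄)
    (ω₁ ω₂ ω₃ ω₄ : ℝ)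
    (hω₁ : ω₁ = Real.sqrt (τ₂ * τ₃ * τ₄) /
      ((Real.sqrt τ₁ + Real.sqrt τ₃) * (Real.sqrt (τ₁ * τ₃) + Real.sqrt (τ₂ * τ₄))))
    (hω₂ : ω₂ = Real.sqrt (τ₁ * τ₃ * τ₄) /
      ((Real.sqrt τ₂ + Real.sqrt τ₄) * (Real.sqrt (τ₁ * τ₃) + Real.sqrt (τ₂ * τ₄))))
    (hω₃ : ω₃ = Real.sqrt (τ₁ * τ₂ * τ₄) /
      ((Real.sqrt τ₁ + Real.sqrt τ₃) * (Real.sqrt (τ₁ * τ₃) + Real.sqrt (τ₂ * τ₄))))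
    (hω₄ : ω₄ = Real.sqrt (τ₁ * τ₂ * τ₃) /
      ((Real.sqrt τ₂ + Real.sqrt τ₄) * (Real.sqrt (τ₁ * τ₃) + Real.sqrt (τ₂ * τ₄)))) :
    ω₁ * τ₁ - ω₂ * τ₂ + ω₃ * τ₃ - ω₄ * τ₄ = 0 := by
  have hω₁₃ : ω₁ * τ₁ + ω₃ * τ₃ =
      √(τ₂ * τ₄) * √(τ₁ * τ₃) / (√(τ₁ * τ₃) + √(τ₂ * τ₄)) := by
    have n₁ : √(τ₂ * τ₃ * τ₄) = √(τ₂ * τ₄) * √τ₃ := by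
      rw [mul_right_comm, sqrt_mul (mul_nonneg h₂.le h₄.le)]
    have n₃ : √(τ₁ * τ₂ * τ₄) = √(τ₂ * τ₄) * √τ₁ := by
      rw [mul_assoc, sqrt_mul h₁.le, mul_comm]
    rw [hω₁, hω₃, n₁, n₃]
    exact sqrt_weight_pair_second_moment h₁ h₃.le _ _
  have hω₂₄ : ω₂ * τ₂ + ω₄ * τ₄ =
      √(τ₁ * τ₃) * √(τ₂ * τ₄) / (√(τ₁ * τ₃) + √(τ₂ * τ₄)) := by
    have n₄ : √(τ₁ * τ₂ * τ₃) = √(τ₁ * τ₃) * √τ₂ := by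
      rw [mul_right_comm, sqrt_mul (mul_nonneg h₁.le h₃.le)]
    rw [hω₂, hω₄, sqrt_mul (mul_nonneg h₁.le h₃.le) τ₄, n₄]
    exact sqrt_weight_pair_second_moment h₂ h₄.le _ _
  linear_combination hω₁₃ - hω₂₄
end

section
/- Let θ be a real number, set α = sin θ + cos θ, β = sin θ - cos θ, and let σ₁, σ₂ ∈ ℝ and t ≥ 0. Consider the four branch displacement pairs (d¹ₓ, d¹ᵧ) = (α·σ₁·√t, α·σ₂·√t), (d²ₓ, d²ᵧ) = (-β·σ₁·√t, β·σ₂·√t), (d³ₓ, d³ᵧ) = (-α·σ₁·√t, -α·σ₂·√t), (d⁴ₓ, d⁴ᵧ) = (β·σ₁·√t, -β·σ₂·√t). Then (1/4)·Σₖ dᵏₓ = 0, (1/4)·Σₖ dᵏᵧ = 0, (1/4)·Σₖ (dᵏₓ)² = σ₁²·t, (1/4)·Σₖ (dᵏᵧ)² = σ₂²·t, and (1/4)·Σₖ dᵏₓ·dᵏᵧ = sin(2θ)·σ₁·σ₂·t. -/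
open Real

theorem sin_add_cos_sq_add_sin_sub_cos_sq (θ : ℝ) :
    (sin θ + cos θ) ^ 2 + (sin θ - cos θ) ^ 2 = 2 := by
  linear_combination 2 * sin_sq_add_cos_sq θ

theorem sin_add_cos_sq_sub_sin_sub_cos_sq (θ : ℝ) :
    (sin θ + cos θ) ^ 2 - (sin θ - cos θ) ^ 2 = 2 * sin (2 * θ) := by
  rw [sin_two_mul]
  ring

theorem branch_moment_matching (θ σ₁ σ₂ t : ℝ) (ht : 0 ≤ t)
    (α β : ℝ) (hα : α = Real.sin θ + Real.cos θ) (hβ : β = Real.sin θ - Real.cos θ) :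
    (1 / 4) * (α * σ₁ * Real.sqrt t + (-(β * σ₁ * Real.sqrt t)) +
      (-(α * σ₁ * Real.sqrt t)) + β * σ₁ * Real.sqrt t) = 0 ∧
    (1 / 4) * (α * σ₂ * Real.sqrt t + β * σ₂ * Real.sqrt t +
      (-(α * σ₂ * Real.sqrt t)) + (-(β * σ₂ * Real.sqrt t))) = 0 ∧
    (1 / 4) * ((α * σ₁ * Real.sqrt t) ^ 2 + (-(β * σ₁ * Real.sqrt t)) ^ 2 +
      (-(α * σ₁ * Real.sqrt t)) ^ 2 + (β * σ₁ * Real.sqrt t) ^ 2) = σ₁ ^ 2 * t ∧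
    (1 / 4) * ((α * σ₂ * Real.sqrt t) ^ 2 + (β * σ₂ * Real.sqrt t) ^ 2 +
      (-(α * σ₂ * Real.sqrt t)) ^ 2 + (-(β * σ₂ * Real.sqrt t)) ^ 2) = σ₂ ^ 2 * t ∧
    (1 / 4) * ((α * σ₁ * Real.sqrt t) * (α * σ₂ * Real.sqrt t) +
      (-(β * σ₁ * Real.sqrt t)) * (β * σ₂ * Real.sqrt t) +
      (-(α * σ₁ * Real.sqrt t)) * (-(α * σ₂ * Real.sqrt t)) +
      (β * σ₁ * Real.sqrt t) * (-(β * σ₂ * Real.sqrt t))) =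
      Real.sin (2 * θ) * σ₁ * σ₂ * t := by
  have hsqrt : √t ^ 2 = t := sq_sqrt ht
  have hsum : α ^ 2 + β ^ 2 = 2 := hα ▸ hβ ▸ sin_add_cos_sq_add_sin_sub_cos_sq θ
  have hdiff : α ^ 2 - β ^ 2 = 2 * sin (2 * θ) := hα ▸ hβ ▸ sin_add_cos_sq_sub_sin_sub_cos_sq θ
  -- The second moments are `(α² ± β²) / 2` times `σᵢ σⱼ (√t)²`.
  refine ⟨by ring, by ring, ?_, ?_, ?_⟩
  · linear_combination σ₁ ^ 2 * √t ^ 2 / 2 * hsum + σ₁ ^ 2 * hsqrt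
  · linear_combination σ₂ ^ 2 * √t ^ 2 / 2 * hsum + σ₂ ^ 2 * hsqrt
  · linear_combination σ₁ * σ₂ * √t ^ 2 / 2 * hdiff + sin (2 * θ) * σ₁ * σ₂ * hsqrt
end
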